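/- arXiv:2510.11846 — 5 statements merged into one kernel-verified Lean document; each statement's English description precedes it below -/
import Mathlib

section
/- For all natural numbers \tau \ge 1 and n with 1 \le n \le \tau - 1, \sum_{\sigma = \tau - 1 - n}^{\tau - 1} (-1)^{\tau - \sigma} \binom{\tau}{\sigma} (\tau - \sigma) \binom{\sigma}{n - (\tau - \sigma - 1)} = 0. -/
/-!
Put `τ = m + 1` and reflect the summation index, `σ = m - j` with `0 ≤ j ≤ n`. Absorbing the
weight, `C(m+1, j+1) (j+1) = (m+1) C(m, j)`, and by trinomial revision
`C(m, j) C(m-j, n-j) = C(m, n) C(n, j)`, so the sum is `-(m+1) C(m, n) ∑_j (-1)^j C(n, j)`,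
which vanishes for `n ≥ 1`.
-/

open Finset

theorem alternating_sum_range_choose_mul_choose_sub {n : ℕ} (m : ℕ) (hn : n ≠ 0) :
    ∑ j ∈ range (n + 1), (-1 : ℤ) ^ j * m.choose j * (m - j).choose (n - j) = 0 := by
  calc _ = ∑ j ∈ range (n + 1), (m.choose n : ℤ) * ((-1) ^ j * n.choose j) := by
        refine sum_congr rfl fun j hj => ?_
        rw [mul_assoc, ← Nat.cast_mul, ← Nat.choose_mul (Nat.lt_succ_iff.mp (mem_range.mp hj))]
        push_cast
        ring
    _ = 0 := by rw [← mul_sum, Int.alternating_sum_range_choose_of_ne hn, mul_zero]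

theorem neg_one_pow_mul_choose_mul_sub_mul_choose_reflect {m j : ℕ} (n : ℕ) (hjm : j ≤ m) :
    (-1 : ℤ) ^ (m + 1 - (m - j)) * (m + 1).choose (m - j) * (m + 1 - (m - j) : ℕ) *
        (m - j).choose (n - (m + 1 - (m - j) - 1)) =
      -(m + 1) * ((-1) ^ j * m.choose j * (m - j).choose (n - j)) := by
  have habsorb : ((m + 1).choose (j + 1) * (j + 1) : ℤ) = (m + 1) * m.choose j := by
    exact_mod_cast (Nat.add_one_mul_choose_eq m j).symm
  rw [show m + 1 - (m - j) = j + 1 by omega, Nat.add_sub_cancel,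
    Nat.choose_symm_of_eq_add (by omega : m + 1 = m - j + (j + 1))]
  push_cast
  linear_combination (-(-1) ^ j * ((m - j).choose (n - j) : ℤ)) * habsorb

/-- For `τ ≥ 1` and `1 ≤ n ≤ τ - 1`,
`∑_{σ = τ-1-n}^{τ-1} (-1)^{τ-σ} C(τ, σ) (τ - σ) C(σ, n - (τ - σ - 1)) = 0`. -/
theorem weighted_alternating_binomial_sum_eq_zero (τ n : ℕ) (hτ : 1 ≤ τ)
    (hn : 1 ≤ n) (hnτ : n ≤ τ - 1) :
    ∑ σ ∈ Finset.Icc (τ - 1 - n) (τ - 1),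
        (-1 : ℤ) ^ (τ - σ) * (τ.choose σ) * (τ - σ : ℕ) *
          (σ.choose (n - (τ - σ - 1))) = 0 := by
  obtain ⟨m, rfl⟩ := Nat.exists_eq_add_of_le' hτ
  rw [Nat.add_sub_cancel] at hnτ ⊢
  have hIcc : Icc (m - n) m = Ico (m + 1 - (n + 1)) (m + 1 - 0) := by
    rw [Nat.add_sub_add_right, Nat.sub_zero, Ico_add_one_right_eq_Icc]
  rw [hIcc, ← sum_Ico_reflect _ 0 (by omega : n + 1 ≤ m + 1), ← range_eq_Ico]
  calc _ = ∑ j ∈ range (n + 1),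
          -(m + 1 : ℤ) * ((-1) ^ j * m.choose j * (m - j).choose (n - j)) :=
        sum_congr rfl fun j hj =>
          neg_one_pow_mul_choose_mul_sub_mul_choose_reflect n (by rw [mem_range] at hj; omega)
    _ = 0 := by rw [← mul_sum, alternating_sum_range_choose_mul_choose_sub m (by omega), mul_zero]
end

section
/- Let \tau, s, n be natural numbers with n \ge 1, n \le s \le \tau. Then \sum_{\sigma = s - n}^{s} (-1)^{\tau - \sigma} \binom{\tau}{\sigma} \binom{\tau - \sigma}{\tau - s} \binom{\sigma}{n - (s - \sigma)} = 0. -/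
/-!
Both binomial products telescope through `Nat.choose_mul`:
`C(τ, σ) C(τ - σ, τ - s) = C(τ, s) C(s, σ)` and
`C(s, σ) C(σ, s - n) = C(s, n) C(n, σ - (s - n))`,
so every term equals `C(τ, s) C(s, n)` times `(-1)^(τ - σ) C(n, σ - (s - n))`, and the sum is
a multiple of the alternating sum of the `n`-th row of Pascal's triangle, which vanishes for
`n ≠ 0`.
-/

open Finset

theorem neg_one_pow_sub_eq_neg_one_pow_add {R : Type*} [Monoid R] [HasDistribNeg R] {a b : ℕ}
    (h : b ≤ a) : (-1 : R) ^ (a - b) = (-1) ^ (a + b) := by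
  rw [show a + b = a - b + 2 * b by omega, pow_add, pow_mul]
  simp

theorem Int.alternating_sum_Icc_choose_sub_eq_zero {m n τ : ℕ} (hn : n ≠ 0)
    (h : m + n ≤ τ) :
    ∑ σ ∈ Icc m (m + n), (-1 : ℤ) ^ (τ - σ) * n.choose (σ - m) = 0 := by
  have hsign : ∀ k ∈ Finset.range (n + 1),
      (-1 : ℤ) ^ (τ - (m + k)) = (-1) ^ (τ + m) * (-1) ^ k := by
    intro k hk
    rw [Finset.mem_range] at hk
    rw [neg_one_pow_sub_eq_neg_one_pow_add (by omega), ← pow_add, add_assoc]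
  rw [← Ico_add_one_right_eq_Icc, sum_Ico_eq_sum_range, show m + n + 1 - m = n + 1 by omega]
  simp_rw [Nat.add_sub_cancel_left]
  rw [sum_congr rfl fun k hk => by rw [hsign k hk, mul_assoc], ← mul_sum,
    Int.alternating_sum_range_choose_of_ne hn, mul_zero]

theorem Nat.choose_mul_choose_sub_sub {n k j : ℕ} (hjk : j ≤ k) (hkn : k ≤ n) :
    n.choose j * (n - j).choose (n - k) = n.choose k * k.choose j := by
  rw [Nat.choose_mul hjk, Nat.choose_symm_of_eq_add (show n - j = n - k + (k - j) by omega)]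

theorem Nat.choose_mul_choose_sub_sub_sub {n k j : ℕ} (hkn : k ≤ n) (hj : n - k ≤ j)
    (hjn : j ≤ n) :
    n.choose j * j.choose (k - (n - j)) = n.choose k * k.choose (j - (n - k)) := by
  rw [Nat.choose_symm_of_eq_add (show j = k - (n - j) + (n - k) by omega), Nat.choose_mul hj,
    Nat.sub_sub_self hkn, Nat.choose_symm hkn]

/-- For `1 ≤ n ≤ s ≤ τ`,
`∑_{σ = s-n}^{s} (-1)^{τ-σ} C(τ, σ) C(τ-σ, τ-s) C(σ, n - (s - σ)) = 0`. -/
theorem triple_alternating_binomial_sum_eq_zero (τ s n : ℕ)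
    (hn : 1 ≤ n) (hns : n ≤ s) (hsτ : s ≤ τ) :
    ∑ σ ∈ Finset.Icc (s - n) s,
        (-1 : ℤ) ^ (τ - σ) * (τ.choose σ) * ((τ - σ).choose (τ - s)) *
          (σ.choose (n - (s - σ))) = 0 := by
  have hterm : ∀ σ ∈ Icc (s - n) s,
      (-1 : ℤ) ^ (τ - σ) * (τ.choose σ) * ((τ - σ).choose (τ - s)) *
          (σ.choose (n - (s - σ))) =
        (τ.choose s * s.choose n : ℤ) * ((-1) ^ (τ - σ) * n.choose (σ - (s - n))) := by
    intro σ hσ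
    obtain ⟨hσl, hσs⟩ := mem_Icc.mp hσ
    have h : τ.choose σ * (τ - σ).choose (τ - s) * σ.choose (n - (s - σ)) =
        τ.choose s * s.choose n * n.choose (σ - (s - n)) := by
      rw [Nat.choose_mul_choose_sub_sub hσs hsτ, mul_assoc,
        Nat.choose_mul_choose_sub_sub_sub hns hσl hσs, ← mul_assoc]
    replace h := congrArg (Nat.cast (R := ℤ)) h
    push_cast at h
    linear_combination (-1 : ℤ) ^ (τ - σ) * h
  have hsum := Int.alternating_sum_Icc_choose_sub_eq_zero (m := s - n) (n := n) (τ := τ)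
    (by omega) (by omega)
  rw [Nat.sub_add_cancel hns] at hsum
  rw [sum_congr rfl hterm, ← mul_sum, hsum, mul_zero]
end

section
/- Let \tau, s, s', n be natural numbers with n \ge 1, s' \le s - n (so s' + n \le s \le \tau). Then \sum_{\sigma = s - n}^{s} (-1)^{\tau - \sigma} \binom{\tau}{\sigma} \binom{\sigma}{s'} \binom{\tau - \sigma}{\tau - s} \binom{\sigma - s'}{n - (s - \sigma)} = 0. -/
/-!
Substituting `σ = s - i` with `0 ≤ i ≤ n`, each product of four binomials is a multinomial
coefficient of `τ` that factors as `C(τ, s') C(τ - s', s - s') C(s - s', n) · C(n, i)`, while the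
sign becomes `(-1)^(τ - s) (-1)^i`. The sum is therefore a constant multiple of
`∑ᵢ (-1)^i C(n, i) = 0`.
-/

namespace Nat

theorem choose_mul_sub_choose (N m i : ℕ) :
    N.choose m * (N - m).choose i = N.choose (m + i) * (m + i).choose i := by
  rw [← choose_symm_add, choose_mul (le_add_right m i), Nat.add_sub_cancel_left]

theorem choose_sub_mul_choose_mul_choose_mul_choose {τ s s' n i : ℕ} (hi : i ≤ n)
    (hs' : s' + n ≤ s) (hsτ : s ≤ τ) :
    τ.choose (s - i) * (s - i).choose s' * (τ - (s - i)).choose (τ - s) *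
        (s - i - s').choose (n - i) =
      τ.choose s' * (τ - s').choose (s - s') * (s - s').choose n * n.choose i := by
  calc τ.choose (s - i) * (s - i).choose s' * (τ - (s - i)).choose (τ - s) *
        (s - i - s').choose (n - i)
      = τ.choose s' * ((τ - s').choose (s - i - s') * (τ - s' - (s - i - s')).choose i) *
          (s - i - s').choose (n - i) := by
        rw [choose_mul (by omega), choose_symm_of_eq_add (by omega : τ - (s - i) = τ - s + i),
          show τ - s' - (s - i - s') = τ - (s - i) by omega]
        ring
    _ = τ.choose s' * (τ - s').choose (s - s') *
          ((s - s').choose i * (s - s' - i).choose (n - i)) := by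
        rw [choose_mul_sub_choose, show s - i - s' + i = s - s' by omega,
          show s - i - s' = s - s' - i by omega]
        ring
    _ = τ.choose s' * (τ - s').choose (s - s') * (s - s').choose n * n.choose i := by
        rw [← choose_mul hi]
        ring

end Nat

theorem Finset.sum_Icc_sub_eq_sum_range {M : Type*} [AddCommMonoid M] (f : ℕ → M) {s n : ℕ}
    (hn : n ≤ s) : ∑ σ ∈ Icc (s - n) s, f σ = ∑ i ∈ range (n + 1), f (s - i) :=
  sum_nbij' (s - ·) (s - ·)
    (fun σ hσ ↦ by simp only [mem_Icc, mem_range] at hσ ⊢; omega)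
    (fun i hi ↦ by simp only [mem_Icc, mem_range] at hi ⊢; omega)
    (fun σ hσ ↦ by simp only [mem_Icc] at hσ; omega)
    (fun i hi ↦ by simp only [mem_range] at hi; omega)
    (fun σ hσ ↦ by rw [Nat.sub_sub_self (mem_Icc.mp hσ).2])

/-- For `n ≥ 1`, `s' + n ≤ s ≤ τ`,
`∑_{σ = s-n}^{s} (-1)^{τ-σ} C(τ, σ) C(σ, s') C(τ-σ, τ-s) C(σ-s', n - (s - σ)) = 0`. -/
theorem quadruple_alternating_binomial_sum_eq_zero (τ s s' n : ℕ)
    (hn : 1 ≤ n) (hs' : s' + n ≤ s) (hsτ : s ≤ τ) :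
    ∑ σ ∈ Finset.Icc (s - n) s,
        (-1 : ℤ) ^ (τ - σ) * (τ.choose σ) * (σ.choose s') *
          ((τ - σ).choose (τ - s)) * ((σ - s').choose (n - (s - σ))) = 0 := by
  rw [Finset.sum_Icc_sub_eq_sum_range _ (by omega)]
  have hterm : ∀ i ∈ Finset.range (n + 1),
      (-1 : ℤ) ^ (τ - (s - i)) * (τ.choose (s - i)) * ((s - i).choose s') *
        ((τ - (s - i)).choose (τ - s)) * ((s - i - s').choose (n - (s - (s - i)))) =
      (-1) ^ (τ - s) * (τ.choose s' * (τ - s').choose (s - s') * (s - s').choose n : ℕ) *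
        ((-1) ^ i * n.choose i) := by
    intro i hmem
    have hi : i ≤ n := Finset.mem_range_succ_iff.mp hmem
    rw [Nat.sub_sub_self (by omega : i ≤ s)]
    have hsign : (-1 : ℤ) ^ (τ - (s - i)) = (-1) ^ (τ - s) * (-1) ^ i := by
      rw [show τ - (s - i) = τ - s + i by omega, pow_add]
    have hprod := congrArg (Nat.cast : ℕ → ℤ)
      (Nat.choose_sub_mul_choose_mul_choose_mul_choose hi hs' hsτ)
    push_cast at hprod ⊢
    rw [hsign]
    linear_combination (-1 : ℤ) ^ (τ - s) * (-1) ^ i * hprod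
  rw [Finset.sum_congr rfl hterm, ← Finset.mul_sum,
    Int.alternating_sum_range_choose_of_ne (by omega), mul_zero]
end

section
/- For every complex number w with |w| > 2 (or for every real w > 2), \frac{1}{2\pi} \int_{-2}^{2} \frac{\sqrt{4 - x^2}}{w - x} \, dx = \frac{w - \sqrt{w^2 - 4}}{2}, where the square root is the branch that is positive for real w > 2. -/
/-!
With `s = √(w² - 4)`, an antiderivative of `√(4 - x²) / (w - x)` on `(-2, 2)` is
`w arcsin (x / 2) - √(4 - x²) - s arcsin ((w x - 4) / (2 (w - x)))`.
For `w > 2` the Möbius map in the last term sends `[-2, 2]` onto `[-1, 1]` with `±2 ↦ ±1`,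
so the integral is `w π - s π`.
-/

open scoped Real
open Real Set

noncomputable section

namespace Semicircle

def mobius (w x : ℝ) : ℝ := (w * x - 4) / (2 * (w - x))

def stieltjesPrimitive (w x : ℝ) : ℝ :=
  w * arcsin (x / 2) - √(4 - x ^ 2) - √(w ^ 2 - 4) * arcsin (mobius w x)

lemma four_sub_sq_pos {x : ℝ} (hx : x ∈ Ioo (-2 : ℝ) 2) : 0 < 4 - x ^ 2 := by
  nlinarith [hx.1, hx.2]

lemma mobius_two {w : ℝ} (hw : w ≠ 2) : mobius w 2 = 1 := by
  rw [mobius, div_eq_one_iff_eq (by intro h; apply hw; linarith)]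
  ring

lemma mobius_neg_two {w : ℝ} (hw : w ≠ -2) : mobius w (-2) = -1 := by
  rw [mobius, div_eq_iff (by intro h; apply hw; linarith)]
  ring

lemma one_sub_mobius_sq {w x : ℝ} (hwx : x ≠ w) :
    1 - mobius w x ^ 2 = (4 - x ^ 2) * (w ^ 2 - 4) / (2 * (w - x)) ^ 2 := by
  have : w - x ≠ 0 := sub_ne_zero.mpr hwx.symm
  rw [mobius]
  field_simp
  ring

lemma abs_mobius_lt_one {w x : ℝ} (hw : 2 < w) (hx : x ∈ Ioo (-2 : ℝ) 2) :
    |mobius w x| < 1 := by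
  have hpos : 0 < 1 - mobius w x ^ 2 := by
    rw [one_sub_mobius_sq (by linarith [hx.2] : x ≠ w)]
    have : 0 < w - x := by linarith [hx.2]
    have := four_sub_sq_pos hx
    have : 0 < w ^ 2 - 4 := by nlinarith
    positivity
  exact (sq_lt_one_iff_abs_lt_one _).mp (by linarith)

lemma hasDerivAt_mobius {w x : ℝ} (hwx : x ≠ w) :
    HasDerivAt (mobius w) ((w ^ 2 - 4) / (2 * (w - x) ^ 2)) x := by
  have hwx' : w - x ≠ 0 := sub_ne_zero.mpr hwx.symm
  have := (((hasDerivAt_id x).const_mul w).sub_const 4).div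
    (((hasDerivAt_const x w).sub (hasDerivAt_id x)).const_mul 2) (mul_ne_zero two_ne_zero hwx')
  refine this.congr_deriv ?_
  simp only [Pi.sub_apply, id]
  field_simp
  ring

lemma hasDerivAt_arcsin_half {x : ℝ} (hx : x ∈ Ioo (-2 : ℝ) 2) :
    HasDerivAt (fun y => arcsin (y / 2)) (1 / √(4 - x ^ 2)) x := by
  have := (hasDerivAt_arcsin (x := x / 2) (by linarith [hx.1]) (by linarith [hx.2])).comp x
    ((hasDerivAt_id x).div_const 2)
  refine this.congr_deriv ?_
  rw [show 1 - (x / 2) ^ 2 = (4 - x ^ 2) / 2 ^ 2 by ring, sqrt_div' _ (by positivity),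
    sqrt_sq zero_le_two]
  have := (sqrt_pos.mpr (four_sub_sq_pos hx)).ne'
  field_simp

lemma hasDerivAt_sqrt_four_sub_sq {x : ℝ} (hx : x ∈ Ioo (-2 : ℝ) 2) :
    HasDerivAt (fun y => √(4 - y ^ 2)) (-x / √(4 - x ^ 2)) x := by
  have hsub : HasDerivAt (fun y => 4 - y ^ 2) (-(2 * x)) x := by
    simpa using (hasDerivAt_pow 2 x).const_sub 4
  refine (hsub.sqrt (four_sub_sq_pos hx).ne').congr_deriv ?_
  have := (sqrt_pos.mpr (four_sub_sq_pos hx)).ne'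
  field_simp

lemma hasDerivAt_arcsin_mobius {w x : ℝ} (hw : 2 < w) (hx : x ∈ Ioo (-2 : ℝ) 2) :
    HasDerivAt (fun y => arcsin (mobius w y)) (√(w ^ 2 - 4) / (√(4 - x ^ 2) * (w - x))) x := by
  have hwx : 0 < w - x := by linarith [hx.2]
  have hu := abs_lt.mp (abs_mobius_lt_one hw hx)
  refine ((hasDerivAt_arcsin hu.1.ne' hu.2.ne).comp x
    (hasDerivAt_mobius (by linarith : x ≠ w))).congr_deriv ?_
  have hr := sqrt_pos.mpr (four_sub_sq_pos hx)
  have hs : 0 < √(w ^ 2 - 4) := sqrt_pos.mpr (by nlinarith)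
  have hs2 : √(w ^ 2 - 4) ^ 2 = w ^ 2 - 4 := sq_sqrt (by nlinarith)
  rw [one_sub_mobius_sq (by linarith : x ≠ w), sqrt_div' _ (by positivity), sqrt_sq (by positivity),
    sqrt_mul' _ (by nlinarith)]
  field_simp
  linear_combination -hs2

lemma hasDerivAt_stieltjesPrimitive {w x : ℝ} (hw : 2 < w) (hx : x ∈ Ioo (-2 : ℝ) 2) :
    HasDerivAt (stieltjesPrimitive w) (√(4 - x ^ 2) / (w - x)) x := by
  have := (((hasDerivAt_arcsin_half hx).const_mul w).sub (hasDerivAt_sqrt_four_sub_sq hx)).sub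
    ((hasDerivAt_arcsin_mobius hw hx).const_mul √(w ^ 2 - 4))
  refine this.congr_deriv ?_
  have hwx : w - x ≠ 0 := by linarith [hx.2]
  have hr := (sqrt_pos.mpr (four_sub_sq_pos hx)).ne'
  have hr2 : √(4 - x ^ 2) ^ 2 = 4 - x ^ 2 := sq_sqrt (four_sub_sq_pos hx).le
  have hs2 : √(w ^ 2 - 4) ^ 2 = w ^ 2 - 4 := sq_sqrt (by nlinarith)
  field_simp
  linear_combination -hr2 - hs2

lemma continuousOn_stieltjesPrimitive {w : ℝ} (hw : 2 < w) :
    ContinuousOn (stieltjesPrimitive w) (Icc (-2) 2) := by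
  have hmob : ContinuousOn (mobius w) (Icc (-2) 2) :=
    continuousOn_of_forall_continuousAt fun x hx =>
      (hasDerivAt_mobius (by linarith [hx.2] : x ≠ w)).continuousAt
  unfold stieltjesPrimitive
  fun_prop

lemma integral_sqrt_four_sub_sq_div_sub {w : ℝ} (hw : 2 < w) :
    ∫ x in (-2 : ℝ)..2, √(4 - x ^ 2) / (w - x) = π * (w - √(w ^ 2 - 4)) := by
  have hint : IntervalIntegrable (fun x => √(4 - x ^ 2) / (w - x)) MeasureTheory.volume (-2) 2 :=
    ContinuousOn.intervalIntegrable (by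
      refine ContinuousOn.div (by fun_prop) (by fun_prop) fun x hx => ?_
      rw [uIcc_of_le (by norm_num)] at hx
      linarith [hx.2])
  rw [intervalIntegral.integral_eq_sub_of_hasDerivAt_of_le (by norm_num)
    (continuousOn_stieltjesPrimitive hw) (fun x hx => hasDerivAt_stieltjesPrimitive hw hx) hint]
  simp only [stieltjesPrimitive, mobius_two (by linarith : w ≠ 2),
    mobius_neg_two (by linarith : w ≠ -2)]
  norm_num
  ring

end Semicircle

open Semicircle in
/-- The Stieltjes transform of the semicircle law: for real `w > 2`,
`(2π)⁻¹ ∫_{-2}^{2} √(4 - x²) / (w - x) dx = (w - √(w² - 4)) / 2`. -/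
theorem semicircle_stieltjes_transform (w : ℝ) (hw : 2 < w) :
    (1 / (2 * π)) * ∫ x in (-2 : ℝ)..2, Real.sqrt (4 - x ^ 2) / (w - x)
      = (w - Real.sqrt (w ^ 2 - 4)) / 2 := by
  rw [integral_sqrt_four_sub_sq_div_sub hw]
  field_simp
end
end

section
/- For every real z < 1, \frac{1}{2\pi} \int_{-2}^{2} \frac{(x^2 + 1)\sqrt{4 - x^2}}{2 - z - (z - 1) x^2} \, dx = \frac{5z - 6 + (3 - 2z)\sqrt{(2 - z)(6 - 5z)}}{2 (z - 1)^2 \sqrt{(2 - z)(6 - 5z)}}. -/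
/-! Since `x² + 1 = ((2 - z) + (1 - z) x²) / (1 - z) - 1 / (1 - z)`, the integral splits into the
half-disc area `∫ √(4 - x²) = 2π` and `∫_{-c}^{c} √(c² - x²) / (a + b x²) = (π / b) (√(a + b c²) / √a - 1)`.
The latter has the primitive
`(√(a + b c²) / √a · arcsin (√(a + b c²) x / (c √(a + b x²))) - arcsin (x / c)) / b`,
which is continuous on `[-c, c]` and where both arcsines take the values `±π/2` at `x = ±c`. -/

open Real Set intervalIntegral

theorem HasDerivAt.arcsin {f : ℝ → ℝ} {f' x : ℝ} (hf : HasDerivAt f f' x) (h : f x ^ 2 < 1) :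
    HasDerivAt (fun y => arcsin (f y)) (f' / √(1 - f x ^ 2)) x := by
  obtain ⟨h₁, h₂⟩ := abs_lt.1 (sq_lt_one_iff_abs_lt_one _ |>.1 h)
  exact ((hasDerivAt_arcsin h₁.ne' h₂.ne).comp x hf).congr_deriv (by ring)

theorem sqrt_one_sub_div_sq {u v w : ℝ} (hv : 0 < v) (hw : 0 ≤ w) (h : v ^ 2 - u ^ 2 = w ^ 2) :
    √(1 - (u / v) ^ 2) = w / v := by
  rw [show 1 - (u / v) ^ 2 = (w / v) ^ 2 by field_simp; linarith, sqrt_sq (by positivity)]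

theorem integral_sqrt_sq_sub_sq {c : ℝ} (hc : 0 < c) :
    ∫ x in -c..c, √(c ^ 2 - x ^ 2) = π * c ^ 2 / 2 := by
  have h (x : ℝ) : √(c ^ 2 - x ^ 2) = c * √(1 - (x / c) ^ 2) := by
    rw [← sqrt_sq hc.le, ← sqrt_mul (sq_nonneg c), sqrt_sq hc.le]
    congr 1
    field_simp
  simp only [h, integral_const_mul, integral_comp_div (fun x => √(1 - x ^ 2)) hc.ne', neg_div,
    div_self hc.ne', integral_sqrt_one_sub_sq, smul_eq_mul]
  ring

section
variable {a b c x : ℝ}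

theorem add_mul_sq_pos (ha : 0 < a) (hm : 0 < a + b * c ^ 2) (hx : x ^ 2 ≤ c ^ 2) :
    0 < a + b * x ^ 2 := by
  rcases le_or_gt 0 b with hb | hb <;> nlinarith [sq_nonneg x]

theorem hasDerivAt_arcsin_div (hc : 0 < c) (hx : x ^ 2 < c ^ 2) :
    HasDerivAt (fun x => arcsin (x / c)) (1 / √(c ^ 2 - x ^ 2)) x := by
  have hs : 0 < √(c ^ 2 - x ^ 2) := sqrt_pos.2 (by linarith)
  have h := ((hasDerivAt_id' x).div_const c).arcsin
    (by rw [div_pow, div_lt_one (by positivity)]; exact hx)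
  rw [sqrt_one_sub_div_sq hc hs.le (sq_sqrt (by linarith)).symm] at h
  exact h.congr_deriv (by field_simp)

theorem hasDerivAt_arcsin_mul_div_sqrt (ha : 0 < a) (hm : 0 < a + b * c ^ 2) (hc : 0 < c)
    (hx : x ^ 2 < c ^ 2) :
    HasDerivAt (fun x => arcsin (√(a + b * c ^ 2) * x / (c * √(a + b * x ^ 2))))
      (√(a + b * c ^ 2) * √a / ((a + b * x ^ 2) * √(c ^ 2 - x ^ 2))) x := by
  have hq := add_mul_sq_pos ha hm hx.le
  have hφ : HasDerivAt (fun x => √(a + b * c ^ 2) * x / (c * √(a + b * x ^ 2))) _ x :=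
    ((hasDerivAt_id' x).const_mul _).div
      ((((hasDerivAt_pow 2 x).const_mul b).const_add a).sqrt hq.ne' |>.const_mul c)
      (by positivity)
  set m := √(a + b * c ^ 2)
  set p := √(a + b * x ^ 2)
  set s := √(c ^ 2 - x ^ 2)
  have hp : 0 < p := sqrt_pos.2 hq
  have hs : 0 < s := sqrt_pos.2 (by linarith)
  have hm2 : m ^ 2 = a + b * c ^ 2 := sq_sqrt hm.le
  have hp2 : p ^ 2 = a + b * x ^ 2 := sq_sqrt hq.le
  have hs2 : s ^ 2 = c ^ 2 - x ^ 2 := sq_sqrt (by linarith)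
  have ha2 : √a ^ 2 = a := sq_sqrt ha.le
  have hcp : 0 < c * p := by positivity
  have hdiscr : (c * p) ^ 2 - (m * x) ^ 2 = (√a * s) ^ 2 := by
    simp only [mul_pow, hm2, hp2, hs2, ha2]; ring
  have h := hφ.arcsin (by
    rw [div_pow, div_lt_one (by positivity)]
    nlinarith [hdiscr, mul_pos (sqrt_pos.2 ha) hs])
  rw [sqrt_one_sub_div_sq hcp (by positivity) hdiscr] at h
  refine h.congr_deriv ?_
  rw [← hp2]
  field_simp
  simp only [Nat.cast_ofNat, Nat.add_one_sub_one, pow_one]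
  linear_combination 2 * m * (hp2 - ha2)

theorem hasDerivAt_sqrt_div_primitive (ha : 0 < a) (hb : b ≠ 0) (hm : 0 < a + b * c ^ 2)
    (hc : 0 < c) (hx : x ^ 2 < c ^ 2) :
    HasDerivAt (fun x => (√(a + b * c ^ 2) / √a *
        arcsin (√(a + b * c ^ 2) * x / (c * √(a + b * x ^ 2))) - arcsin (x / c)) / b)
      (√(c ^ 2 - x ^ 2) / (a + b * x ^ 2)) x := by
  have hq := add_mul_sq_pos ha hm hx.le
  have hs : 0 < √(c ^ 2 - x ^ 2) := sqrt_pos.2 (by linarith)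
  have hr : 0 < √a := sqrt_pos.2 ha
  refine ((((hasDerivAt_arcsin_mul_div_sqrt ha hm hc hx).const_mul _).sub
    (hasDerivAt_arcsin_div hc hx)).div_const b).congr_deriv ?_
  field_simp
  rw [sq_sqrt hm.le, sq_sqrt (by linarith : 0 ≤ c ^ 2 - x ^ 2)]
  ring

theorem integral_sqrt_sq_sub_sq_div (ha : 0 < a) (hb : b ≠ 0) (hm : 0 < a + b * c ^ 2)
    (hc : 0 < c) :
    ∫ x in -c..c, √(c ^ 2 - x ^ 2) / (a + b * x ^ 2) = π / b * (√(a + b * c ^ 2) / √a - 1) := by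
  have hq (x : ℝ) (hx : x ∈ Icc (-c) c) : 0 < a + b * x ^ 2 :=
    add_mul_sq_pos ha hm (sq_le_sq' hx.1 hx.2)
  rw [integral_eq_sub_of_hasDerivAt_of_le (by linarith) ?cont
    (fun x hx => hasDerivAt_sqrt_div_primitive ha hb hm hc (sq_lt_sq' hx.1 hx.2)) ?int]
  case cont =>
    have hp (x : ℝ) (hx : x ∈ Icc (-c) c) : c * √(a + b * x ^ 2) ≠ 0 :=
      (mul_pos hc (sqrt_pos.2 (hq x hx))).ne'
    fun_prop (disch := assumption)
  case int =>
    refine ContinuousOn.intervalIntegrable ?_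
    rw [uIcc_of_le (by linarith)]
    exact ContinuousOn.div (by fun_prop) (by fun_prop) fun x hx => (hq x hx).ne'
  have hφ : √(a + b * c ^ 2) * c / (c * √(a + b * c ^ 2)) = 1 := by
    field_simp [(sqrt_pos.2 hm).ne']
  simp only [neg_sq, mul_neg, neg_div, div_self hc.ne', hφ, arcsin_neg, arcsin_one]
  ring

end

/-- For real `z < 1`,
`(2π)⁻¹ ∫_{-2}^{2} (x²+1)√(4-x²) / (2 - z - (z-1)x²) dx
  = (5z - 6 + (3 - 2z)√((2-z)(6-5z))) / (2(z-1)² √((2-z)(6-5z)))`. -/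
theorem gue_limit_shape_integral (z : ℝ) (hz : z < 1) :
    (1 / (2 * π)) *
        ∫ x in (-2 : ℝ)..2,
          ((x ^ 2 + 1) * Real.sqrt (4 - x ^ 2)) / (2 - z - (z - 1) * x ^ 2)
      = (5 * z - 6 + (3 - 2 * z) * Real.sqrt ((2 - z) * (6 - 5 * z))) /
          (2 * (z - 1) ^ 2 * Real.sqrt ((2 - z) * (6 - 5 * z))) := by
  have ha : 0 < 2 - z := by linarith
  have hb : 0 < 1 - z := by linarith
  have hm : 0 < 2 - z + (1 - z) * 2 ^ 2 := by linarith
  have hq (x : ℝ) : 2 - z + (1 - z) * x ^ 2 ≠ 0 := by positivity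
  have hsplit (x : ℝ) : (x ^ 2 + 1) * √(4 - x ^ 2) / (2 - z - (z - 1) * x ^ 2) =
      (1 - z)⁻¹ * √(2 ^ 2 - x ^ 2) - (1 - z)⁻¹ * (√(2 ^ 2 - x ^ 2) / (2 - z + (1 - z) * x ^ 2)) := by
    rw [show 2 - z - (z - 1) * x ^ 2 = 2 - z + (1 - z) * x ^ 2 by ring,
      show (4 : ℝ) = 2 ^ 2 by norm_num]
    field_simp [hq x]
    ring
  simp only [hsplit]
  rw [integral_sub ?int₁ ?int₂, integral_const_mul, integral_const_mul,
    integral_sqrt_sq_sub_sq two_pos, integral_sqrt_sq_sub_sq_div ha hb.ne' hm two_pos,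
    show 2 - z + (1 - z) * 2 ^ 2 = 6 - 5 * z by ring, sqrt_mul ha.le]
  case int₁ | int₂ => exact Continuous.intervalIntegrable (by fun_prop (disch := exact hq)) _ _
  have hr : 0 < √(2 - z) := sqrt_pos.2 ha
  have hs : 0 < √(6 - 5 * z) := sqrt_pos.2 (by linarith)
  have hs2 : √(6 - 5 * z) ^ 2 = 6 - 5 * z := sq_sqrt (by linarith)
  -- opaque square roots keep `field_simp` from rewriting the radicands
  generalize √(2 - z) = r at *
  generalize √(6 - 5 * z) = s at *
  have hz1 : z - 1 ≠ 0 := by linarith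
  field_simp [pi_ne_zero]
  linear_combination (-(z - 1) ^ 2) * hs2
end
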